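/- Let A be a totally unimodular matrix of rank r with columns a_1,...,a_m, and suppose that every signed circuit C = C^+ ⊔ C^- satisfies |C^+| = |C^-| (the represented oriented matroid is co-Eulerian). Then the root polytope conv{a_1,...,a_m} has affine dimension r - 1. -/

import Mathlib

/-!
On each circuit `C` a totally unimodular matrix has a kernel vector with entries `±1` on `C`
(Cramer's rule on a nonsingular maximal square submatrix of the columns of `C`). Kernel vectors
supported on a circuit form a line, so the co-Eulerian condition says that each of them has
coordinate sum zero; as they span `ker A`, the coordinate sum vanishes on `ker A` and hence
factors through `A`: some linear functional `φ` equals `1` on every column. The columns therefore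
lie in the affine hyperplane `φ = 1` of their `r`-dimensional span, so their affine span has
dimension `r - 1`.
-/

open Finset

def Matrix.ColDep {m n : Type*} (A : Matrix m n ℝ) (S : Finset n) : Prop :=
  ¬ LinearIndependent ℝ (fun i : S => A.transpose i.1)

def Matrix.IsCircuit {m n : Type*} (A : Matrix m n ℝ) (C : Finset n) : Prop :=
  A.ColDep C ∧ ∀ S ⊂ C, ¬ A.ColDep S

/-- A signed circuit: a circuit `C⁺ ⊔ C⁻` with `∑_{i∈C⁺} a_i - ∑_{i∈C⁻} a_i = 0`. -/
def Matrix.IsSignedCircuit {m n : Type*} [Fintype m] [DecidableEq n]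
    (A : Matrix m n ℝ) (Cp Cm : Finset n) : Prop :=
  Disjoint Cp Cm ∧ A.IsCircuit (Cp ∪ Cm) ∧
    (∑ i ∈ Cp, A.transpose i) - (∑ i ∈ Cm, A.transpose i) = 0

open Matrix

/-- For empty `s` both sides are `0`, by truncated subtraction. -/
theorem finrank_vectorSpan_eq_finrank_span_sub_one {K V : Type*} [Field K] [AddCommGroup V]
    [Module K V] [FiniteDimensional K V] {s : Set V} (φ : Module.Dual K V)
    (hφ : ∀ x ∈ s, φ x = 1) :
    Module.finrank K (vectorSpan K s) = Module.finrank K (Submodule.span K s) - 1 := by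
  rcases s.eq_empty_or_nonempty with rfl | ⟨p, hps⟩
  · rw [vectorSpan_empty, Submodule.span_empty, finrank_bot]
  have hφD : vectorSpan K s ≤ LinearMap.ker φ := by
    rw [vectorSpan_def, Submodule.span_le]
    rintro _ ⟨x, hx, y, hy, rfl⟩
    simp [hφ x hx, hφ y hy]
  have hp : p ∉ vectorSpan K s := fun h => by simpa [hφ p hps] using hφD h
  have hp0 : p ≠ 0 := by
    rintro rfl
    exact hp (zero_mem _)
  have hsup : vectorSpan K s ⊔ K ∙ p = Submodule.span K s := by
    apply le_antisymm
    · refine sup_le ?_ ((Submodule.span_singleton_le_iff_mem _ _).2 (Submodule.subset_span hps))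
      rw [vectorSpan_def, Submodule.span_le]
      rintro _ ⟨x, hx, y, hy, rfl⟩
      exact sub_mem (Submodule.subset_span hx) (Submodule.subset_span hy)
    · rw [Submodule.span_le]
      intro x hx
      simpa using Submodule.add_mem_sup (vsub_mem_vectorSpan K hx hps)
        (Submodule.mem_span_singleton_self p)
  have hinf : vectorSpan K s ⊓ K ∙ p = ⊥ :=
    ((Submodule.disjoint_span_singleton' hp0).2 hp).eq_bot
  have := Submodule.finrank_sup_add_finrank_inf_eq (vectorSpan K s) (K ∙ p)
  rw [hsup, hinf, finrank_bot, finrank_span_singleton hp0] at this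
  omega

theorem Finset.sum_smul_eq_sum_filter_sub_sum_filter {R M ι : Type*} [Ring R] [DecidableEq R]
    [AddCommGroup M] [Module R M] {s : Finset ι} {z : ι → R}
    (hz : ∀ i ∈ s, z i = 1 ∨ z i = -1) (g : ι → M) :
    ∑ i ∈ s, z i • g i = ∑ i ∈ s with z i = 1, g i - ∑ i ∈ s with z i ≠ 1, g i := by
  rw [← sum_filter_add_sum_filter_not s (z · = 1), sub_eq_add_neg,
    ← sum_neg_distrib]
  congr 1 <;> refine sum_congr rfl fun i hi => ?_ <;> rw [mem_filter] at hi
  · rw [hi.2, one_smul]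
  · rw [(hz i hi.1).resolve_left hi.2, neg_one_smul]

namespace Matrix

theorem mulVec_eq_sum_of_forall_notMem {R k n : Type*} [CommSemiring R] [Fintype n]
    (A : Matrix k n R) {S : Finset n} {d : n → R} (hd : ∀ i ∉ S, d i = 0) :
    A *ᵥ d = ∑ i ∈ S, d i • A.col i := by
  rw [mulVec_eq_sum, ← sum_subset (subset_univ S) fun i _ hi => by simp [hd i hi]]
  simp [col]

theorem exists_dual_apply_col_eq_one_of_sum_eq_zero {K k n : Type*} [Field K] [Fintype n]
    (A : Matrix k n K) (h : ∀ c, A *ᵥ c = 0 → ∑ i, c i = 0) :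
    ∃ φ : Module.Dual K (k → K), ∀ i, φ (A.col i) = 1 := by
  classical
  let σ : Module.Dual K (n → K) := ∑ i, LinearMap.proj i
  have hσ : σ ∈ (LinearMap.ker A.mulVecLin).dualAnnihilator := by
    rw [Submodule.mem_dualAnnihilator]
    intro c hc
    simpa [σ] using h c hc
  rw [← LinearMap.range_dualMap_eq_dualAnnihilator_ker] at hσ
  obtain ⟨φ, hφ⟩ := hσ
  refine ⟨φ, fun i => ?_⟩
  simpa [σ, Pi.single_apply] using LinearMap.congr_fun hφ (Pi.single i 1)

theorem exists_det_submatrix_ne_zero {K k n ι : Type*} [Field K] [Fintype k] [Fintype ι]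
    [DecidableEq ι] (A : Matrix k n K) (σ : ι → n) (hσ : LinearIndependent K (A.col ∘ σ)) :
    ∃ ρ : ι → k, (A.submatrix ρ σ).det ≠ 0 := by
  let N : Matrix k ι K := A.submatrix id σ
  have hrank : N.rank = Fintype.card ι := by
    rw [← rank_transpose]
    exact LinearIndependent.rank_matrix hσ
  have hspan : Submodule.span K (Set.range N.row) = ⊤ := by
    apply Submodule.eq_top_of_finrank_eq
    rw [← rank_eq_finrank_span_row, hrank, Module.finrank_fintype_fun_eq_card]
  obtain ⟨κ, a, -, haspan, hali⟩ := exists_linearIndependent' K N.row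
  let b : Module.Basis κ K (ι → K) := .mk hali (by rw [haspan, hspan])
  let e : ι ≃ κ := (Pi.basisFun K ι).indexEquiv b
  refine ⟨a ∘ e, ?_⟩
  rw [← isUnit_iff_ne_zero, ← isUnit_iff_isUnit_det, ← linearIndependent_rows_iff_isUnit]
  exact hali.comp e e.injective

theorem cramer_mulVec {R ι : Type*} [CommRing R] [Fintype ι] [DecidableEq ι]
    (M : Matrix ι ι R) (x : ι → R) : M.cramer (M *ᵥ x) = M.det • x := by
  rw [cramer_eq_adjugate_mulVec, mulVec_mulVec, adjugate_mul, smul_mulVec, one_mulVec]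

theorem IsTotallyUnimodular.apply_mem_range_of_mulVec_eq_col {R k n ι : Type*} [CommRing R]
    [Fintype ι] [DecidableEq ι] {A : Matrix k n R} (hA : A.IsTotallyUnimodular) {ρ : ι → k}
    {σ : ι → n} (hdet : (A.submatrix ρ σ).det ≠ 0) {j : n} {x : ι → R}
    (hx : A.submatrix ρ σ *ᵥ x = fun a => A (ρ a) j) (b : ι) :
    x b ∈ Set.range SignType.cast := by
  obtain ⟨s, hs⟩ := (isTotallyUnimodular_iff_fintype A).1 hA ι ρ σ
  obtain ⟨t, ht⟩ := (isTotallyUnimodular_iff_fintype A).1 hA ι ρ (Function.update σ b j)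
  have hcramer : (A.submatrix ρ σ).det * x b = (A.submatrix ρ (Function.update σ b j)).det := by
    have := congrFun (cramer_mulVec (A.submatrix ρ σ) x) b
    rw [cramer_apply, hx] at this
    rw [← smul_eq_mul, ← Pi.smul_apply, ← this]
    congr 1
    ext a c
    rcases eq_or_ne c b with rfl | hcb
    · simp
    · simp [hcb]
  have hss : (s : R) * s = 1 := by
    rcases s with _ | _ | _
    · exact absurd hs.symm (by simpa using hdet)
    all_goals simp
  refine ⟨s * t, ?_⟩
  calc ((s * t : SignType) : R) = s * ((s : R) * x b) := by
        rw [SignType.coe_mul, hs, hcramer, ht]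
    _ = x b := by rw [← mul_assoc, hss, one_mul]

section Circuits

variable {k n : Type*} [Fintype n] (A : Matrix k n ℝ)

def circuitVectors : Set (n → ℝ) :=
  {z | A *ᵥ z = 0 ∧ ∃ C, A.IsCircuit C ∧ ∀ i ∉ C, z i = 0}

theorem colDep_iff_exists_mulVec_eq_zero {S : Finset n} :
    A.ColDep S ↔ ∃ d : n → ℝ, A *ᵥ d = 0 ∧ (∀ i ∉ S, d i = 0) ∧ d ≠ 0 := by
  classical
  change ¬LinearIndepOn ℝ A.col (S : Set n) ↔ _
  rw [not_linearIndepOn_finset_iff]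
  constructor
  · rintro ⟨f, hf, i, hi, hfi⟩
    have hdS : ∀ j ∉ S, (if j ∈ S then f j else 0) = 0 := fun j hj => if_neg hj
    refine ⟨fun j => if j ∈ S then f j else 0, ?_, hdS, fun h => hfi ?_⟩
    · rw [A.mulVec_eq_sum_of_forall_notMem hdS, ← hf]
      exact sum_congr rfl fun j hj => by rw [if_pos hj]
    · simpa [hi] using congrFun h i
  · rintro ⟨d, hd, hdS, hd0⟩
    obtain ⟨i, hi⟩ := Function.ne_iff.mp hd0
    exact ⟨d, by rwa [← A.mulVec_eq_sum_of_forall_notMem hdS], i,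
      by_contra fun h => hi (hdS i h), hi⟩

theorem exists_isCircuit_subset {S : Finset n} (hS : A.ColDep S) : ∃ C ⊆ S, A.IsCircuit C := by
  induction S using strongInduction with
  | H S ih =>
    by_cases h : ∃ T ⊂ S, A.ColDep T
    · obtain ⟨T, hTS, hT⟩ := h
      obtain ⟨C, hCT, hC⟩ := ih T hTS hT
      exact ⟨C, hCT.trans hTS.subset, hC⟩
    · exact ⟨S, subset_rfl, hS, fun T hTS hT => h ⟨T, hTS, hT⟩⟩

namespace IsCircuit

variable {A} {C : Finset n} (hC : A.IsCircuit C)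
include hC

theorem nonempty : C.Nonempty := by
  obtain ⟨d, -, hdC, hd0⟩ := (A.colDep_iff_exists_mulVec_eq_zero).1 hC.1
  rw [nonempty_iff_ne_empty]
  rintro rfl
  exact hd0 (funext fun i => hdC i (notMem_empty i))

theorem eq_zero_of_ssubset {S : Finset n} (hS : S ⊂ C) {d : n → ℝ} (hd : A *ᵥ d = 0)
    (hdS : ∀ i ∉ S, d i = 0) : d = 0 := by
  by_contra hd0
  exact hC.2 S hS ((A.colDep_iff_exists_mulVec_eq_zero).2 ⟨d, hd, hdS, hd0⟩)

theorem apply_ne_zero {d : n → ℝ} (hd : A *ᵥ d = 0) (hdC : ∀ i ∉ C, d i = 0)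
    (hd0 : d ≠ 0) {i : n} (hi : i ∈ C) : d i ≠ 0 := by
  classical
  intro hdi
  refine hd0 (hC.eq_zero_of_ssubset (erase_ssubset hi) hd fun j hj => ?_)
  rcases eq_or_ne j i with rfl | hji
  · exact hdi
  · exact hdC j fun hjC => hj (mem_erase.2 ⟨hji, hjC⟩)

theorem eq_smul_of_mulVec_eq_zero {w z : n → ℝ} (hw : A *ᵥ w = 0) (hwC : ∀ i ∉ C, w i = 0)
    (hz : A *ᵥ z = 0) (hzC : ∀ i ∉ C, z i = 0) {j : n} (hj : j ∈ C) (hwj : w j ≠ 0) :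
    z = (z j / w j) • w := by
  classical
  rw [← sub_eq_zero]
  refine hC.eq_zero_of_ssubset (erase_ssubset hj)
    (by rw [mulVec_sub, mulVec_smul, hz, hw, smul_zero, sub_zero]) fun i hi => ?_
  rcases eq_or_ne i j with rfl | hij
  · simp [div_mul_cancel₀ _ hwj]
  · have hiC : i ∉ C := fun hiC => hi (mem_erase.2 ⟨hij, hiC⟩)
    simp [hwC i hiC, hzC i hiC]

end IsCircuit

theorem mem_span_circuitVectors {c : n → ℝ} (hc : A *ᵥ c = 0) :
    c ∈ Submodule.span ℝ A.circuitVectors := by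
  classical
  obtain ⟨S, hS⟩ : ∃ S, univ.filter (c · ≠ 0) = S := ⟨_, rfl⟩
  induction S using strongInduction generalizing c with
  | H S ih =>
    have hcS : ∀ i ∉ S, c i = 0 := fun i hi => by
      by_contra h
      exact hi (hS ▸ mem_filter.2 ⟨mem_univ i, h⟩)
    by_cases hc0 : c = 0
    · exact hc0 ▸ zero_mem _
    obtain ⟨C, hCS, hC⟩ :=
      A.exists_isCircuit_subset ((A.colDep_iff_exists_mulVec_eq_zero).2 ⟨c, hc, hcS, hc0⟩)
    obtain ⟨d, hd, hdC, hd0⟩ := (A.colDep_iff_exists_mulVec_eq_zero).1 hC.1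
    obtain ⟨j, hj⟩ := Function.ne_iff.mp hd0
    have hjC : j ∈ C := by_contra fun h => hj (hdC j h)
    set c' := c - (c j / d j) • d with hc'
    have hc'0 : A *ᵥ c' = 0 := by rw [mulVec_sub, mulVec_smul, hc, hd, smul_zero, sub_zero]
    have hc'S : univ.filter (c' · ≠ 0) ⊂ S := by
      refine lt_of_le_of_lt (fun i hi => ?_) (erase_ssubset (hCS hjC))
      rw [mem_filter] at hi
      rw [mem_erase]
      refine ⟨?_, by_contra fun hiS => hi.2 ?_⟩
      · rintro rfl
        exact hi.2 (by simp [hc', div_mul_cancel₀ _ hj])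
      · simp [hc', hcS i hiS, hdC i fun hiC => hiS (hCS hiC)]
    have hd_mem : d ∈ Submodule.span ℝ A.circuitVectors :=
      Submodule.subset_span ⟨hd, C, hC, hdC⟩
    simpa [hc'] using add_mem (ih _ hc'S hc'0 rfl) (Submodule.smul_mem _ (c j / d j) hd_mem)

end Circuits

theorem IsTotallyUnimodular.exists_circuit_vector {k n : Type*} [Fintype k] [Fintype n]
    {A : Matrix k n ℝ} (hA : A.IsTotallyUnimodular) {C : Finset n} (hC : A.IsCircuit C) :
    ∃ z : n → ℝ, A *ᵥ z = 0 ∧ (∀ i ∈ C, z i = 1 ∨ z i = -1) ∧ ∀ i ∉ C, z i = 0 := by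
  classical
  obtain ⟨j, hj⟩ := hC.nonempty
  obtain ⟨d, hd, hdC, hd0⟩ := (A.colDep_iff_exists_mulVec_eq_zero).1 hC.1
  have hdj := hC.apply_ne_zero hd hdC hd0 hj
  set z := (d j)⁻¹ • d with hz_def
  have hz : A *ᵥ z = 0 := by rw [mulVec_smul, hd, smul_zero]
  have hzC : ∀ i ∉ C, z i = 0 := fun i hi => by simp [hz_def, hdC i hi]
  have hzj : z j = 1 := by simp [hz_def, hdj]
  have hz0 : z ≠ 0 := fun h => by simp [h] at hzj
  have hli : LinearIndependent ℝ (A.col ∘ ((↑) : C.erase j → n)) :=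
    not_not.1 (hC.2 _ (erase_ssubset hj))
  obtain ⟨ρ, hρ⟩ := exists_det_submatrix_ne_zero A _ hli
  have hx : A.submatrix ρ (↑) *ᵥ (fun i : C.erase j => -z i) = fun a => A (ρ a) j := by
    funext a
    have := congrFun (A.mulVec_eq_sum_of_forall_notMem hzC) (ρ a)
    rw [hz, ← add_sum_erase _ _ hj, hzj] at this
    simp only [Pi.zero_apply, Pi.add_apply, Finset.sum_apply, Pi.smul_apply, col_apply,
      smul_eq_mul, one_mul, mul_comm (z _)] at this
    simp only [mulVec, dotProduct, univ_eq_attach, submatrix_apply, mul_neg, sum_neg_distrib,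
      sum_attach (C.erase j) fun c => A (ρ a) c * z c]
    linarith
  refine ⟨z, hz, fun i hi => ?_, hzC⟩
  rcases eq_or_ne i j with rfl | hij
  · exact Or.inl hzj
  obtain ⟨s, hs⟩ :=
    hA.apply_mem_range_of_mulVec_eq_col hρ hx ⟨i, mem_erase.2 ⟨hij, hi⟩⟩
  have hzi := hC.apply_ne_zero hz hzC hz0 hi
  rcases s with _ | _ | _ <;> simp at hs
  · exact absurd hs hzi
  · exact Or.inl hs.symm
  · exact Or.inr (by linarith)

theorem IsCircuit.sum_eq_zero_of_coEulerian {k n : Type*} [Fintype k] [Fintype n]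
    [DecidableEq n] {A : Matrix k n ℝ} {C : Finset n} (hC : A.IsCircuit C)
    (hco : ∀ Cp Cm : Finset n, A.IsSignedCircuit Cp Cm → Cp.card = Cm.card) {z : n → ℝ}
    (hz : A *ᵥ z = 0) (hzC : ∀ i ∈ C, z i = 1 ∨ z i = -1) (hzC' : ∀ i ∉ C, z i = 0) :
    ∑ i, z i = 0 := by
  have hsum : ∑ i ∈ C with z i = 1, A.col i - ∑ i ∈ C with z i ≠ 1, A.col i = 0 := by
    rw [← sum_smul_eq_sum_filter_sub_sum_filter hzC,
      ← A.mulVec_eq_sum_of_forall_notMem hzC', hz]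
  have hcard := hco {i ∈ C | z i = 1} {i ∈ C | z i ≠ 1}
    ⟨disjoint_filter_filter_not _ _ _, by rwa [filter_union_filter_not_eq], hsum⟩
  rw [← sum_subset (subset_univ C) fun i _ hi => hzC' i hi]
  calc ∑ i ∈ C, z i = ∑ i ∈ C, z i • (1 : ℝ) := by simp
    _ = 0 := by rw [sum_smul_eq_sum_filter_sub_sum_filter hzC]; simp [hcard]

theorem IsTotallyUnimodular.sum_eq_zero_of_mulVec_eq_zero {k n : Type*} [Fintype k] [Fintype n]
    [DecidableEq n] {A : Matrix k n ℝ} (hA : A.IsTotallyUnimodular)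
    (hco : ∀ Cp Cm : Finset n, A.IsSignedCircuit Cp Cm → Cp.card = Cm.card) {c : n → ℝ}
    (hc : A *ᵥ c = 0) : ∑ i, c i = 0 := by
  refine Submodule.span_induction ?mem (by simp) ?add ?smul (A.mem_span_circuitVectors hc)
  case mem =>
    rintro z ⟨hz, C, hC, hzC⟩
    obtain ⟨w, hw, hwC, hwC'⟩ := hA.exists_circuit_vector hC
    obtain ⟨j, hj⟩ := hC.nonempty
    have hwj : w j ≠ 0 := by rcases hwC j hj with h | h <;> simp [h]
    rw [hC.eq_smul_of_mulVec_eq_zero hw hwC' hz hzC hj hwj]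
    simp [← mul_sum, hC.sum_eq_zero_of_coEulerian hco hw hwC hwC']
  case add =>
    intro x y _ _ hx hy
    simp [sum_add_distrib, hx, hy]
  case smul =>
    intro a x _ hx
    simp [← mul_sum, hx]

end Matrix

/-- If `A` is totally unimodular of rank `r` and every signed circuit
`C = C⁺ ⊔ C⁻` satisfies `|C⁺| = |C⁻|` (the represented oriented matroid is co-Eulerian),
then the root polytope `conv{a_1,…,a_m}` has affine dimension `r - 1`. -/
theorem root_polytope_dim_of_coEulerian
    {k n : Type*} [Fintype k] [Fintype n] [DecidableEq n]
    (A : Matrix k n ℝ) (hA : A.IsTotallyUnimodular) (r : ℕ) (hr : A.rank = r)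
    (hco : ∀ Cp Cm : Finset n, A.IsSignedCircuit Cp Cm → Cp.card = Cm.card) :
    Module.finrank ℝ (affineSpan ℝ (Set.range A.transpose)).direction = r - 1 := by
  obtain ⟨φ, hφ⟩ :=
    A.exists_dual_apply_col_eq_one_of_sum_eq_zero fun _ => hA.sum_eq_zero_of_mulVec_eq_zero hco
  rw [direction_affineSpan, finrank_vectorSpan_eq_finrank_span_sub_one φ
    (by rintro _ ⟨i, rfl⟩; exact hφ i), ← hr, rank_eq_finrank_span_cols]
  rfl
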